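/- arXiv:1604.06337 — 3 statements merged into one kernel-verified Lean document; each statement's English description precedes it below -/
import Mathlib

section
/- With B_p(z) = ((p−1)/(2π)) ∑_{k∈ℤ} t^p/(2πik+t)^p where t = |log(|z|²)|: for every 0 < a < 1 there exists c > 0 such that sup_{a ≤ |z| < 1} |B_p(z) − (p−1)/(2π)| = O(e^{−cp}) as p → ∞. -/
/-!
The `k = 0` term of the series is `1`. For `k ≠ 0` and `t = |log |z|²|`, which lies in `(0, T]`
with `T = |log a²|`, one has `|t / (2πik + t)|² = t² / (t² + 4π²k²)`; this is at most
`ρ² = T² / (T² + 4π²) < 1` and at most `(T / 2π)² / k²`. Hence the `k`-th term is bounded by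
`ρ^(p-2) (T / 2π)² / k²`, the tail is `O(ρ^p)` uniformly in `z`, and the prefactor `p - 1` is
absorbed by halving the exponential rate `-log ρ`.
-/

open Real
open Complex (I)

noncomputable def bergmanTerm (t : ℝ) (p : ℕ) (k : ℤ) : ℂ :=
  (t : ℂ) ^ p / (2 * π * I * k + t) ^ p

lemma norm_two_pi_I_mul_add_sq (t : ℝ) (k : ℤ) :
    ‖2 * π * I * k + t‖ ^ 2 = t ^ 2 + (2 * π * k) ^ 2 := by
  rw [show 2 * π * I * k + t = ((t : ℝ) : ℂ) + ((2 * π * k : ℝ) : ℂ) * I by push_cast; ring,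
    Complex.norm_add_mul_I, sq_sqrt (by positivity)]

lemma bergmanTerm_zero {t : ℝ} (ht : t ≠ 0) (p : ℕ) : bergmanTerm t p 0 = 1 := by
  simp [bergmanTerm, ht]

lemma norm_bergmanTerm {t : ℝ} (ht : 0 ≤ t) (p : ℕ) (k : ℤ) :
    ‖bergmanTerm t p k‖ = (t / ‖2 * π * I * k + t‖) ^ p := by
  simp [bergmanTerm, div_pow, abs_of_nonneg ht]

noncomputable def tailRatio (T : ℝ) : ℝ :=
  √(T ^ 2 / (T ^ 2 + (2 * π) ^ 2))

lemma tailRatio_pos {T : ℝ} (hT : 0 < T) : 0 < tailRatio T :=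
  sqrt_pos.mpr (by positivity)

lemma tailRatio_lt_one (T : ℝ) : tailRatio T < 1 := by
  rw [tailRatio, sqrt_lt' one_pos, one_pow, div_lt_one (by positivity)]
  linarith [pow_pos two_pi_pos 2]

section RatioBounds

variable {t T : ℝ} {k : ℤ}

lemma div_norm_sq_le_of_ne_zero (hk : k ≠ 0) (ht : 0 ≤ t) (htT : t ≤ T) :
    (t / ‖2 * π * I * k + t‖) ^ 2 ≤ T ^ 2 / (T ^ 2 + (2 * π) ^ 2) := by
  have hk2 : (1 : ℝ) ≤ (k : ℝ) ^ 2 := mod_cast (one_le_sq_iff_one_le_abs _).mpr (Int.one_le_abs hk)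
  have hTt : t ^ 2 ≤ T ^ 2 := pow_le_pow_left₀ ht htT 2
  rw [div_pow, norm_two_pi_I_mul_add_sq, div_le_div_iff₀ (by positivity) (by positivity)]
  have : (2 * π) ^ 2 ≤ (2 * π * k) ^ 2 := by nlinarith [sq_nonneg (2 * π)]
  nlinarith [mul_le_mul hTt this (by positivity) (sq_nonneg T)]

lemma div_norm_sq_le_inv_sq (hk : k ≠ 0) (t : ℝ) :
    (t / ‖2 * π * I * k + t‖) ^ 2 ≤ (t / (2 * π)) ^ 2 * (1 / (k : ℝ) ^ 2) := by
  have hk2 : (1 : ℝ) ≤ (k : ℝ) ^ 2 := mod_cast (one_le_sq_iff_one_le_abs _).mpr (Int.one_le_abs hk)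
  rw [div_pow, div_pow, norm_two_pi_I_mul_add_sq, div_mul_div_comm, mul_one, ← mul_pow]
  exact div_le_div_of_nonneg_left (sq_nonneg t) (by positivity) (by nlinarith [sq_nonneg t])

end RatioBounds

lemma norm_bergmanTerm_le {t T : ℝ} {p : ℕ} {k : ℤ} (hp : 2 ≤ p) (hk : k ≠ 0) (ht : 0 ≤ t)
    (htT : t ≤ T) :
    ‖bergmanTerm t p k‖ ≤ tailRatio T ^ (p - 2) * ((T / (2 * π)) ^ 2 * (1 / (k : ℝ) ^ 2)) := by
  set q := t / ‖2 * π * I * k + t‖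
  have hq : 0 ≤ q := by positivity
  have hqρ : q ≤ tailRatio T :=
    (le_sqrt hq (by positivity)).mpr (div_norm_sq_le_of_ne_zero hk ht htT)
  have hqk : q ^ 2 ≤ (T / (2 * π)) ^ 2 * (1 / (k : ℝ) ^ 2) :=
    (div_norm_sq_le_inv_sq hk t).trans (by gcongr)
  rw [norm_bergmanTerm ht, ← Nat.sub_add_cancel hp, pow_add, Nat.add_sub_cancel]
  exact mul_le_mul (pow_le_pow_left₀ hq hqρ _) hqk (by positivity) (pow_nonneg (hq.trans hqρ) _)

lemma norm_tsum_sub_le_of_norm_le {β E : Type*} [NormedAddCommGroup E] [CompleteSpace E]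
    {f : β → E} {g : β → ℝ} (b : β) (hg : Summable g) (hgb : 0 ≤ g b)
    (hfg : ∀ k ≠ b, ‖f k‖ ≤ g k) :
    ‖∑' k, f k - f b‖ ≤ ∑' k, g k := by
  classical
  have hbound : ∀ k, ‖if k = b then 0 else f k‖ ≤ g k := by
    intro k
    split_ifs with hk
    · simpa [hk] using hgb
    · exact hfg k hk
  have hf : Summable f := by
    refine (Summable.of_norm_bounded hg hbound).congr_cofinite ?_
    filter_upwards [Set.finite_singleton b |>.compl_mem_cofinite] with k hk
    simp_all
  rw [hf.tsum_eq_add_tsum_ite b, add_sub_cancel_left]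
  exact tsum_of_norm_bounded hg.hasSum hbound

-- The `k = 0` summand of `∑' k, 1 / k²` is the junk value `1 / 0 = 0`.
lemma norm_tsum_bergmanTerm_sub_one_le {t T : ℝ} {p : ℕ} (hp : 2 ≤ p) (ht : 0 < t)
    (htT : t ≤ T) :
    ‖∑' k, bergmanTerm t p k - 1‖ ≤
      tailRatio T ^ (p - 2) * ((T / (2 * π)) ^ 2 * ∑' k : ℤ, 1 / (k : ℝ) ^ 2) := by
  rw [← bergmanTerm_zero ht.ne' p, ← tsum_mul_left, ← tsum_mul_left]
  refine norm_tsum_sub_le_of_norm_le 0 ?_ (by simp) fun k hk =>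
    norm_bergmanTerm_le hp hk ht.le htT
  exact ((summable_one_div_int_pow.mpr one_lt_two).mul_left _).mul_left _

lemma norm_natCast_sub_one_div_two_pi_le {p : ℕ} (hp : 1 ≤ p) :
    ‖((p : ℂ) - 1) / (2 * π)‖ ≤ p := by
  have hp1 : (1 : ℝ) ≤ p := mod_cast hp
  rw [show ((p : ℂ) - 1) / (2 * π) = (((p : ℝ) - 1) / (2 * π) : ℝ) by push_cast; ring,
    Complex.norm_real, norm_of_nonneg (by bound), div_le_iff₀ two_pi_pos]
  nlinarith [pi_gt_three]

lemma abs_log_sq_mem_Ioc {a r : ℝ} (ha : 0 < a) (har : a ≤ r) (hr : r < 1) :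
    0 < |log (r ^ 2)| ∧ |log (r ^ 2)| ≤ |log (a ^ 2)| := by
  have hr0 : 0 < r := ha.trans_le har
  have hlog_r : log (r ^ 2) < 0 := log_neg (by positivity) (by nlinarith)
  have hlog_a : log (a ^ 2) ≤ log (r ^ 2) := log_le_log (by positivity) (by gcongr)
  rw [abs_of_neg hlog_r, abs_of_neg (hlog_a.trans_lt hlog_r)]
  constructor <;> linarith

lemma mul_exp_neg_two_mul_le {c : ℝ} (hc : 0 < c) (x : ℝ) :
    x * exp (-(2 * c) * x) ≤ exp (-c * x) / c := by
  have hx : x ≤ exp (c * x) / c := by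
    rw [le_div_iff₀ hc]
    linarith [add_one_le_exp (c * x)]
  calc x * exp (-(2 * c) * x) ≤ exp (c * x) / c * exp (-(2 * c) * x) := by gcongr
    _ = exp (-c * x) / c := by rw [div_mul_eq_mul_div, ← exp_add]; ring_nf

lemma exists_nat_mul_pow_le_exp {ρ : ℝ} (hρ0 : 0 < ρ) (hρ1 : ρ < 1) :
    ∃ c > (0 : ℝ), ∃ C : ℝ, ∀ p : ℕ, p * ρ ^ p ≤ C * exp (-c * p) := by
  have hc : 0 < -log ρ / 2 := by linarith [log_neg hρ0 hρ1]
  refine ⟨-log ρ / 2, hc, 2 / -log ρ, fun p => ?_⟩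
  have hρp : ρ ^ p = exp (-(2 * (-log ρ / 2)) * p) := by
    rw [← rpow_natCast, rpow_def_of_pos hρ0]; ring_nf
  rw [hρp, show 2 / -log ρ = 1 / (-log ρ / 2) by ring, one_div_mul_eq_div]
  exact mul_exp_neg_two_mul_le hc p

/-- with B_p(z) = ((p−1)/(2π)) ∑_{k∈ℤ} t^p/(2πik+t)^p, t = |log|z|²|,
for every 0 < a < 1 there are c > 0 and C with
sup_{a ≤ |z| < 1} |B_p(z) − (p−1)/(2π)| ≤ C e^{−cp}. -/
theorem bergman_density_exp_decay (a : ℝ) (ha0 : 0 < a) (ha1 : a < 1) :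
    ∃ c > (0 : ℝ), ∃ C : ℝ, ∀ p : ℕ, 2 ≤ p → ∀ z : ℂ,
      a ≤ ‖z‖ → ‖z‖ < 1 →
      Norm.norm
        ((((p : ℂ) - 1) / (2 * Real.pi))
            * (∑' k : ℤ, ((|Real.log (‖z‖ ^ 2)| : ℝ) : ℂ) ^ p
                / (2 * Real.pi * Complex.I * (k : ℂ)
                    + ((|Real.log (‖z‖ ^ 2)| : ℝ) : ℂ)) ^ p)
          - ((p : ℂ) - 1) / (2 * Real.pi))
        ≤ C * Real.exp (-c * p) := by
  set T := |log (a ^ 2)|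
  set ρ := tailRatio T
  have hρ0 : 0 < ρ := tailRatio_pos (abs_log_sq_mem_Ioc ha0 le_rfl ha1).1
  obtain ⟨c, hc, C, hC⟩ := exists_nat_mul_pow_le_exp hρ0 (tailRatio_lt_one T)
  set K := (T / (2 * π)) ^ 2 * ∑' k : ℤ, 1 / (k : ℝ) ^ 2
  refine ⟨c, hc, C * K / ρ ^ 2, fun p hp z hza hz1 => ?_⟩
  obtain ⟨ht0, htT⟩ := abs_log_sq_mem_Ioc ha0 hza hz1
  set t := |log (‖z‖ ^ 2)|
  calc _ = ‖((p : ℂ) - 1) / (2 * π)‖ * ‖∑' k, bergmanTerm t p k - 1‖ := by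
        rw [← norm_mul, mul_sub, mul_one]; rfl
    _ ≤ p * (ρ ^ (p - 2) * K) := by
        gcongr
        exacts [norm_natCast_sub_one_div_two_pi_le (one_le_two.trans hp),
          norm_tsum_bergmanTerm_sub_one_le hp ht0 htT]
    _ = p * ρ ^ p * (K / ρ ^ 2) := by
        rw [← Nat.sub_add_cancel hp, Nat.add_sub_cancel, pow_add]; field_simp
    _ ≤ C * exp (-c * p) * (K / ρ ^ 2) := mul_le_mul_of_nonneg_right (hC p) (by positivity)
    _ = C * K / ρ ^ 2 * exp (-c * p) := by ring
end

section
/- Let ψ_p(ζ) = exp(p(1 − ζ + log ζ)) for ζ > 0, G₀(η) = exp(−η²/2) and G₁(η) = η³ exp(−η²/2). There exists a constant C such that for all ζ > 0 and all p ≥ 1: |ψ_p(ζ) − G₀(√p(1−ζ)) + (1/(3√p)) G₁(√p(1−ζ))| ≤ C / (p(1 + p(1−ζ)²)). -/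
/-!
Write `u = 1 - ζ` and `w = p u²`. Near the peak (`|u| ≤ 1/2`, `p |u|³ ≤ 1/2`) split the exponent as
`p (u + log (1 - u)) = -w/2 + s` with `s = p (u + u²/2 + log (1 - u)) = O(p |u|³)`; since
`e^s = 1 + s + O(s²)` and `s = -p u³/3 + O(p u⁴)`, the remainder is `e^{-w/2} O(p² u⁶ + p u⁴)`,
which is `O((1 + w)⁴ e^{-w/2}) / (p (1 + w))`. Off the peak one has `p ≤ 4 (1 + w)³`, and
`u + log (1 - u) ≤ -u² / (2 (1 + |u|))` makes `ψ_p` decay like `e^{-w/3}` or `e^{-p|u|/6}`, so the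
three terms can be bounded separately. Every estimate ends in `(1 + t)ⁿ e^{-t/c} ≤ n! cⁿ e^{1/c}`.
-/

open Real Finset
open scoped Nat

lemma one_add_pow_mul_exp_neg_div_le (n : ℕ) {c t : ℝ} (hc : 0 < c) (ht : 0 ≤ 1 + t) :
    (1 + t) ^ n * exp (-(t / c)) ≤ n ! * c ^ n * exp (1 / c) := by
  have h := (div_le_iff₀ (by positivity)).mp (pow_div_factorial_le_exp _ (div_nonneg ht hc.le) n)
  calc (1 + t) ^ n * exp (-(t / c)) = c ^ n * ((1 + t) / c) ^ n * exp (-(t / c)) := by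
        rw [div_pow, mul_div_cancel₀ _ (by positivity)]
    _ ≤ c ^ n * (exp ((1 + t) / c) * n !) * exp (-(t / c)) := by gcongr
    _ = n ! * c ^ n * exp (1 / c) := by
        rw [mul_assoc, mul_right_comm, ← exp_add, add_div, add_neg_cancel_right]; ring

lemma log_one_sub_le {u : ℝ} (h0 : 0 ≤ u) (h1 : u < 1) : log (1 - u) ≤ -u - u ^ 2 / 2 := by
  have hsum := hasSum_pow_div_log_of_abs_lt_one (x := u) (by rwa [abs_of_nonneg h0])
  have := sum_le_hasSum (range 2) (fun i _ => by positivity) hsum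
  norm_num [sum_range_succ] at this
  linarith

lemma log_le_sub_inv_div_two {z : ℝ} (hz : 1 ≤ z) : log z ≤ (z - z⁻¹) / 2 := by
  rw [← sinh_log (by linarith)]
  exact self_le_sinh_iff.mpr (log_nonneg hz)

lemma add_log_one_sub_le {u : ℝ} (hu : u < 1) : u + log (1 - u) ≤ -(u ^ 2 / (2 * (1 + |u|))) := by
  rcases le_or_gt 0 u with h0 | h0
  · have hlog := log_one_sub_le h0 hu
    have hdenom : u ^ 2 / (2 * (1 + |u|)) ≤ u ^ 2 / 2 :=
      div_le_div_of_nonneg_left (sq_nonneg u) two_pos (by linarith [abs_nonneg u])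
    linarith
  · have hlog := log_le_sub_inv_div_two (z := 1 - u) (by linarith)
    have hne : 1 - u ≠ 0 := by linarith
    have key : u + (1 - u - (1 - u)⁻¹) / 2 = -(u ^ 2 / (2 * (1 + |u|))) := by
      rw [abs_of_neg h0, ← sub_eq_add_neg]; field_simp; ring
    linarith

lemma abs_sum_add_log_one_sub_le {u : ℝ} (hu : |u| ≤ 1 / 2) (n : ℕ) :
    |(∑ i ∈ range n, u ^ (i + 1) / (i + 1)) + log (1 - u)| ≤ 2 * |u| ^ (n + 1) := by
  refine (abs_log_sub_add_sum_range_le (by linarith) n).trans ?_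
  rw [div_le_iff₀ (by linarith)]
  nlinarith [pow_nonneg (abs_nonneg u) (n + 1)]

/-- The approximation error at `ζ = 1 - u`, with `√q` cleared (see `psi_sub_gaussians_eq`). -/
noncomputable def psiRemainder (q u : ℝ) : ℝ :=
  exp (q * (u + log (1 - u))) - exp (-(q * u ^ 2 / 2)) + q * u ^ 3 / 3 * exp (-(q * u ^ 2 / 2))

section PsiRemainder

variable {q u : ℝ}

lemma abs_psiRemainder_le_of_near_peak (hq : 0 ≤ q) (hu : |u| ≤ 1 / 2)
    (hqu : q * |u| ^ 3 ≤ 1 / 2) :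
    |psiRemainder q u| ≤ exp (-(q * u ^ 2 / 2)) * (4 * q ^ 2 * |u| ^ 6 + 2 * q * |u| ^ 4) := by
  have h2 := abs_sum_add_log_one_sub_le hu 2
  have h3 := abs_sum_add_log_one_sub_le hu 3
  norm_num [sum_range_succ] at h2 h3
  set s := q * (u + u ^ 2 / 2 + log (1 - u)) with hs
  have hs_abs : |s| ≤ 2 * q * |u| ^ 3 := by
    rw [hs, abs_mul, abs_of_nonneg hq]
    linarith [mul_le_mul_of_nonneg_left h2 hq]
  have hs_sq : s ^ 2 ≤ 4 * q ^ 2 * |u| ^ 6 := by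
    rw [← sq_abs]
    nlinarith [abs_nonneg s]
  have hcubic : |q * (u + u ^ 2 / 2 + u ^ 3 / 3 + log (1 - u))| ≤ 2 * q * |u| ^ 4 := by
    rw [abs_mul, abs_of_nonneg hq]
    linarith [mul_le_mul_of_nonneg_left h3 hq]
  have hsplit : psiRemainder q u = exp (-(q * u ^ 2 / 2)) *
      ((exp s - 1 - s) + q * (u + u ^ 2 / 2 + u ^ 3 / 3 + log (1 - u))) := by
    have : q * (u + log (1 - u)) = -(q * u ^ 2 / 2) + s := by rw [hs]; ring
    rw [psiRemainder, this, exp_add, hs]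
    ring
  rw [hsplit, abs_mul, abs_of_pos (exp_pos _)]
  gcongr
  calc _ ≤ |exp s - 1 - s| + |q * (u + u ^ 2 / 2 + u ^ 3 / 3 + log (1 - u))| := abs_add_le _ _
    _ ≤ s ^ 2 + 2 * q * |u| ^ 4 :=
        add_le_add (abs_exp_sub_one_sub_id_le (hs_abs.trans (by linarith))) hcubic
    _ ≤ _ := by linarith

lemma abs_psiRemainder_mul_le_of_near_peak (hq : 0 ≤ q) (hu : |u| ≤ 1 / 2)
    (hqu : q * |u| ^ 3 ≤ 1 / 2) :
    |psiRemainder q u| * (q * (1 + q * u ^ 2)) ≤ 6 * (4 ! * 2 ^ 4 * exp (1 / 2)) := by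
  set w := q * u ^ 2 with hw
  have hw0 : 0 ≤ w := by positivity
  have hpoly : (4 * q ^ 2 * |u| ^ 6 + 2 * q * |u| ^ 4) * (q * (1 + w)) ≤ 6 * (1 + w) ^ 4 := by
    have : (4 * q ^ 2 * |u| ^ 6 + 2 * q * |u| ^ 4) * (q * (1 + w))
        = (4 * w ^ 3 + 2 * w ^ 2) * (1 + w) := by
      rw [hw, show |u| ^ 6 = (u ^ 2) ^ 3 by rw [← sq_abs u]; ring,
        show |u| ^ 4 = (u ^ 2) ^ 2 by rw [← sq_abs u]; ring]
      ring
    rw [this]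
    nlinarith [pow_nonneg hw0 2, pow_nonneg hw0 3, pow_nonneg hw0 4]
  calc |psiRemainder q u| * (q * (1 + w))
      ≤ exp (-(w / 2)) * (4 * q ^ 2 * |u| ^ 6 + 2 * q * |u| ^ 4) * (q * (1 + w)) := by
        gcongr
        exact abs_psiRemainder_le_of_near_peak hq hu hqu
    _ ≤ 6 * ((1 + w) ^ 4 * exp (-(w / 2))) := by
        rw [mul_assoc]; nlinarith [exp_pos (-(w / 2))]
    _ ≤ 6 * (4 ! * 2 ^ 4 * exp (1 / 2)) :=
        mul_le_mul_of_nonneg_left (one_add_pow_mul_exp_neg_div_le 4 two_pos (by linarith))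
          (by norm_num)

lemma le_four_mul_one_add_pow_three_of_off_peak (hq : 0 ≤ q)
    (h : 1 / 2 < |u| ∨ 1 / 2 < q * |u| ^ 3) : q ≤ 4 * (1 + q * u ^ 2) ^ 3 := by
  set w := q * u ^ 2 with hw
  have hw0 : 0 ≤ w := by positivity
  have hw_le : w ≤ (1 + w) ^ 3 := by nlinarith [pow_nonneg hw0 2, pow_nonneg hw0 3]
  rcases h with hu | hqu
  · have : q ≤ 4 * w := by
      have hu2 : 1 / 4 ≤ |u| ^ 2 := by nlinarith [abs_nonneg u]
      rw [hw, ← sq_abs]; nlinarith [mul_le_mul_of_nonneg_left hu2 hq]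
    nlinarith
  · have : q ≤ 4 * w ^ 3 := by
      have hcube : w ^ 3 = q * (q * |u| ^ 3) ^ 2 := by rw [hw, ← sq_abs]; ring
      have hqu2 : 1 / 4 ≤ (q * |u| ^ 3) ^ 2 := by nlinarith
      rw [hcube]; nlinarith [mul_le_mul_of_nonneg_left hqu2 hq]
    nlinarith [pow_le_pow_left₀ hw0 (le_add_of_nonneg_left zero_le_one : w ≤ 1 + w) 3]

lemma abs_psiRemainder_le (hq : 0 ≤ q) :
    |psiRemainder q u| ≤
      exp (q * (u + log (1 - u))) + exp (-(q * u ^ 2 / 2)) * (1 + q * |u| ^ 3 / 3) := by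
  have hcubic : |q * u ^ 3 / 3 * exp (-(q * u ^ 2 / 2))|
      = q * |u| ^ 3 / 3 * exp (-(q * u ^ 2 / 2)) := by
    rw [abs_mul, abs_of_pos (exp_pos _), abs_div, abs_mul, abs_pow, abs_of_nonneg hq,
      abs_of_pos (three_pos : (0 : ℝ) < 3)]
  calc |psiRemainder q u|
      ≤ |exp (q * (u + log (1 - u))) - exp (-(q * u ^ 2 / 2))|
        + |q * u ^ 3 / 3 * exp (-(q * u ^ 2 / 2))| := abs_add_le _ _
    _ ≤ |exp (q * (u + log (1 - u)))| + |exp (-(q * u ^ 2 / 2))|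
        + |q * u ^ 3 / 3 * exp (-(q * u ^ 2 / 2))| := by gcongr; exact abs_sub _ _
    _ = _ := by rw [hcubic, abs_of_pos (exp_pos _), abs_of_pos (exp_pos _)]; ring

lemma exp_mul_add_log_one_sub_mul_le_of_off_peak (hq : 0 ≤ q) (hu : u < 1)
    (h : 1 / 2 < |u| ∨ 1 / 2 < q * |u| ^ 3) :
    exp (q * (u + log (1 - u))) * (q * (1 + q * u ^ 2)) ≤
      4 * (4 ! * 3 ^ 4 * exp (1 / 3)) + 2 ! * 6 ^ 2 * exp (1 / 6) := by
  have hf := add_log_one_sub_le hu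
  rcases le_or_gt |u| (1 / 2) with hsmall | hlarge
  · set w := q * u ^ 2 with hw
    have hexp : q * (u + log (1 - u)) ≤ -(w / 3) := by
      have : u ^ 2 / 3 ≤ u ^ 2 / (2 * (1 + |u|)) :=
        div_le_div_of_nonneg_left (sq_nonneg u) (by positivity) (by linarith)
      nlinarith [mul_le_mul_of_nonneg_left (hf.trans (neg_le_neg this)) hq]
    calc exp (q * (u + log (1 - u))) * (q * (1 + w))
        ≤ exp (-(w / 3)) * (4 * (1 + w) ^ 3 * (1 + w)) := by
          gcongr
          exact le_four_mul_one_add_pow_three_of_off_peak hq h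
      _ = 4 * ((1 + w) ^ 4 * exp (-(w / 3))) := by ring
      _ ≤ 4 * (4 ! * 3 ^ 4 * exp (1 / 3)) := mul_le_mul_of_nonneg_left
          (one_add_pow_mul_exp_neg_div_le 4 three_pos (by positivity)) (by norm_num)
      _ ≤ _ := le_add_of_nonneg_right (by positivity)
  · set y := q * |u| with hy
    have hexp : q * (u + log (1 - u)) ≤ -(y / 6) := by
      have : |u| / 6 ≤ u ^ 2 / (2 * (1 + |u|)) := by
        rw [div_le_div_iff₀ (by norm_num) (by positivity), ← sq_abs]
        nlinarith
      nlinarith [mul_le_mul_of_nonneg_left (hf.trans (neg_le_neg this)) hq]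
    have hweight : q * (1 + q * u ^ 2) ≤ (1 + y) ^ 2 := by
      have : q ≤ 2 * y := by nlinarith
      rw [hy, ← sq_abs]
      nlinarith
    calc exp (q * (u + log (1 - u))) * (q * (1 + q * u ^ 2))
        ≤ (1 + y) ^ 2 * exp (-(y / 6)) := by
          rw [mul_comm]
          gcongr
      _ ≤ 2 ! * 6 ^ 2 * exp (1 / 6) :=
          one_add_pow_mul_exp_neg_div_le 2 (by norm_num) (by positivity)
      _ ≤ _ := le_add_of_nonneg_left (by positivity)

lemma gaussian_terms_mul_le_of_off_peak (hq : 1 ≤ q)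
    (h : 1 / 2 < |u| ∨ 1 / 2 < q * |u| ^ 3) :
    exp (-(q * u ^ 2 / 2)) * (1 + q * |u| ^ 3 / 3) * (q * (1 + q * u ^ 2)) ≤
      4 * (6 ! * 2 ^ 6 * exp (1 / 2)) := by
  set w := q * u ^ 2 with hw
  have hw0 : 0 ≤ w := by positivity
  have habs : |u| ≤ 1 + w := by
    have : |u| ^ 2 ≤ w := by rw [sq_abs, hw]; nlinarith [sq_nonneg u]
    nlinarith [sq_nonneg (|u| - 1)]
  have hcubic : 1 + q * |u| ^ 3 / 3 ≤ (1 + w) ^ 2 := by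
    have : q * |u| ^ 3 = w * |u| := by rw [hw, ← sq_abs]; ring
    rw [this]
    nlinarith [mul_le_mul_of_nonneg_left habs hw0]
  have hq_le := le_four_mul_one_add_pow_three_of_off_peak (by linarith) h
  calc exp (-(w / 2)) * (1 + q * |u| ^ 3 / 3) * (q * (1 + w))
      ≤ exp (-(w / 2)) * (1 + w) ^ 2 * (4 * (1 + w) ^ 3 * (1 + w)) := by
        gcongr
    _ = 4 * ((1 + w) ^ 6 * exp (-(w / 2))) := by ring
    _ ≤ 4 * (6 ! * 2 ^ 6 * exp (1 / 2)) := mul_le_mul_of_nonneg_left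
        (one_add_pow_mul_exp_neg_div_le 6 two_pos (by positivity)) (by norm_num)

lemma exists_abs_psiRemainder_mul_le :
    ∃ C, ∀ q u : ℝ, 1 ≤ q → u < 1 → |psiRemainder q u| * (q * (1 + q * u ^ 2)) ≤ C := by
  refine ⟨6 * (4 ! * 2 ^ 4 * exp (1 / 2)) + (4 * (4 ! * 3 ^ 4 * exp (1 / 3))
    + 2 ! * 6 ^ 2 * exp (1 / 6) + 4 * (6 ! * 2 ^ 6 * exp (1 / 2))), fun q u hq hu => ?_⟩
  by_cases hpeak : |u| ≤ 1 / 2 ∧ q * |u| ^ 3 ≤ 1 / 2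
  · exact (abs_psiRemainder_mul_le_of_near_peak (by linarith) hpeak.1 hpeak.2).trans
      (le_add_of_nonneg_right (by positivity))
  · rw [not_and_or, not_le, not_le] at hpeak
    calc |psiRemainder q u| * (q * (1 + q * u ^ 2))
        ≤ (exp (q * (u + log (1 - u))) + exp (-(q * u ^ 2 / 2)) * (1 + q * |u| ^ 3 / 3))
          * (q * (1 + q * u ^ 2)) := by
          gcongr
          exact abs_psiRemainder_le (by linarith)
      _ ≤ _ := by
          rw [add_mul]
          linarith [exp_mul_add_log_one_sub_mul_le_of_off_peak (by linarith) hu hpeak,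
            gaussian_terms_mul_le_of_off_peak hq hpeak, exp_pos (1 / 2 : ℝ)]

end PsiRemainder

lemma psi_sub_gaussians_eq {q : ℝ} (hq : 0 ≤ q) (ζ : ℝ) :
    exp (q * (1 - ζ + log ζ)) - exp (-(sqrt q * (1 - ζ)) ^ 2 / 2)
        + 1 / (3 * sqrt q) * ((sqrt q * (1 - ζ)) ^ 3 * exp (-(sqrt q * (1 - ζ)) ^ 2 / 2))
      = psiRemainder q (1 - ζ) := by
  have hsq : sqrt q ^ 2 = q := sq_sqrt hq
  have hgauss : -(sqrt q * (1 - ζ)) ^ 2 / 2 = -(q * (1 - ζ) ^ 2 / 2) := by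
    rw [mul_pow, hsq]; ring
  rcases hq.eq_or_lt with rfl | hq0
  · simp [psiRemainder]
  · have hcube : 1 / (3 * sqrt q) * (sqrt q * (1 - ζ)) ^ 3 = q * (1 - ζ) ^ 3 / 3 := by
      have : sqrt q ≠ 0 := by positivity
      rw [mul_pow, show sqrt q ^ 3 = q * sqrt q by rw [pow_succ, hsq, mul_comm]]
      field_simp
    rw [psiRemainder, sub_sub_cancel, hgauss, ← mul_assoc, hcube]

/-- uniform Gaussian approximation of ψ_p(ζ) = e^{p(1−ζ+log ζ)}:
|ψ_p(ζ) − G₀(√p(1−ζ)) + (1/(3√p)) G₁(√p(1−ζ))| ≤ C/(p(1+p(1−ζ)²)). -/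
theorem psi_gaussian_approx :
    ∃ C : ℝ, ∀ p : ℕ, 1 ≤ p → ∀ ζ : ℝ, 0 < ζ →
      |Real.exp (p * (1 - ζ + Real.log ζ))
          - Real.exp (-(Real.sqrt p * (1 - ζ)) ^ 2 / 2)
          + (1 / (3 * Real.sqrt p))
              * ((Real.sqrt p * (1 - ζ)) ^ 3
                * Real.exp (-(Real.sqrt p * (1 - ζ)) ^ 2 / 2))|
        ≤ C / (p * (1 + p * (1 - ζ) ^ 2)) := by
  obtain ⟨C, hC⟩ := exists_abs_psiRemainder_mul_le
  refine ⟨C, fun p hp ζ hζ => ?_⟩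
  have hq : (1 : ℝ) ≤ p := by exact_mod_cast hp
  rw [psi_sub_gaussians_eq (by positivity), le_div_iff₀ (by positivity)]
  exact hC p (1 - ζ) hq (by linarith)
end

section
/- Let G₁(η) = η³ e^{−η²/2}. Then sup_{x∈(0,1)} |log x| · ∑_{ℓ=1}^∞ |G₁(√p(1 + ℓ log x))| = O(1) as p → ∞. -/
/-!
Since `|η|³ ≤ 6 e^{|η|}` and `|η| - η²/2 ≤ 2 - |η|`, we have `|G₁(η)| ≤ 6 e^{2 - |η|}`.
For `η = √p (1 + ℓ log x)` with `p ≥ 1` this is at most `6 e^{3 + ℓ log x} = 6 e³ xˡ`, so the sum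
is dominated by the geometric series `6 e³ x / (1 - x)`, and `|log x| · x / (1 - x) ≤ 1`.
-/

open Real

noncomputable def gaussianG1 (η : ℝ) : ℝ := η ^ 3 * exp (-η ^ 2 / 2)

lemma pow_three_le_six_mul_exp {s : ℝ} (hs : 0 ≤ s) : s ^ 3 ≤ 6 * exp s := by
  have h := pow_div_factorial_le_exp s hs 3
  norm_num [Nat.factorial] at h
  linarith

lemma abs_gaussianG1_le (η : ℝ) : |gaussianG1 η| ≤ 6 * exp (2 - |η|) := by
  have hcube : |η| ^ 3 ≤ 6 * exp |η| := pow_three_le_six_mul_exp (abs_nonneg η)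
  have hexponent : |η| + -η ^ 2 / 2 ≤ 2 - |η| := by
    nlinarith [sq_nonneg (|η| - 2), sq_abs η]
  calc |gaussianG1 η| = |η| ^ 3 * exp (-η ^ 2 / 2) := by
        rw [gaussianG1, abs_mul, abs_pow, abs_exp]
    _ ≤ 6 * exp |η| * exp (-η ^ 2 / 2) := by gcongr
    _ = 6 * exp (|η| + -η ^ 2 / 2) := by rw [mul_assoc, ← exp_add]
    _ ≤ 6 * exp (2 - |η|) := by gcongr

lemma abs_gaussianG1_mul_le_pow {a x : ℝ} (ha : 1 ≤ a) (hx : 0 < x) (n : ℕ) :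
    |gaussianG1 (a * (1 + n * log x))| ≤ 6 * exp 3 * x ^ n := by
  have hscale : -(1 + n * log x) ≤ |a * (1 + n * log x)| := by
    rw [abs_mul, abs_of_pos (by linarith)]
    nlinarith [neg_le_abs (1 + n * log x), abs_nonneg (1 + n * log x)]
  calc |gaussianG1 (a * (1 + n * log x))| ≤ 6 * exp (2 - |a * (1 + n * log x)|) :=
        abs_gaussianG1_le _
    _ ≤ 6 * exp (3 + n * log x) := by gcongr; linarith
    _ = 6 * exp 3 * x ^ n := by rw [exp_add, exp_nat_mul, exp_log hx, mul_assoc]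

lemma neg_log_mul_self_le_one_sub {x : ℝ} (hx : 0 < x) : -log x * x ≤ 1 - x := by
  have h := mul_le_mul_of_nonneg_right (one_sub_inv_le_log_of_pos hx) hx.le
  rw [sub_mul, inv_mul_cancel₀ hx.ne'] at h
  linarith

lemma abs_log_mul_tsum_pow_succ_le_one {x : ℝ} (hx₀ : 0 < x) (hx₁ : x < 1) :
    |log x| * ∑' n : ℕ, x ^ (n + 1) ≤ 1 := by
  have hsum : ∑' n : ℕ, x ^ (n + 1) = x * (1 - x)⁻¹ := by
    simp_rw [pow_succ']
    rw [tsum_mul_left, tsum_geometric_of_lt_one hx₀.le hx₁]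
  rw [hsum, abs_of_neg (log_neg hx₀ hx₁), ← mul_assoc, ← div_eq_mul_inv,
    div_le_one (sub_pos.mpr hx₁)]
  exact neg_log_mul_self_le_one_sub hx₀

/-- sup_{x∈(0,1)} |log x| ∑_{ℓ≥1} |G₁(√p(1+ℓ log x))| = O(1). -/
theorem gaussian_G1_sum_bounded :
    ∃ C : ℝ, ∀ p : ℕ, 1 ≤ p → ∀ x : ℝ, 0 < x → x < 1 →
      |Real.log x|
          * ∑' ℓ : ℕ,
              |(Real.sqrt p * (1 + ((ℓ : ℝ) + 1) * Real.log x)) ^ 3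
                * Real.exp (-(Real.sqrt p * (1 + ((ℓ : ℝ) + 1) * Real.log x)) ^ 2 / 2)|
        ≤ C := by
  refine ⟨6 * exp 3, fun p hp x hx₀ hx₁ => ?_⟩
  have hsqrt : 1 ≤ √(p : ℝ) := one_le_sqrt.mpr (by exact_mod_cast hp)
  have hterm (ℓ : ℕ) :
      |gaussianG1 (√p * (1 + ((ℓ : ℝ) + 1) * log x))| ≤ 6 * exp 3 * x ^ (ℓ + 1) := by
    exact_mod_cast abs_gaussianG1_mul_le_pow hsqrt hx₀ (ℓ + 1)
  have hgeom : Summable fun ℓ : ℕ => 6 * exp 3 * x ^ (ℓ + 1) :=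
    ((summable_nat_add_iff 1).mpr (summable_geometric_of_lt_one hx₀.le hx₁)).mul_left _
  have htsum := (hgeom.of_nonneg_of_le (fun _ => abs_nonneg _) hterm).tsum_le_tsum hterm hgeom
  rw [tsum_mul_left] at htsum
  calc _ ≤ |log x| * (6 * exp 3 * ∑' ℓ : ℕ, x ^ (ℓ + 1)) := by gcongr; exact htsum
    _ = 6 * exp 3 * (|log x| * ∑' ℓ : ℕ, x ^ (ℓ + 1)) := by ring
    _ ≤ 6 * exp 3 :=
        mul_le_of_le_one_right (by positivity) (abs_log_mul_tsum_pow_succ_le_one hx₀ hx₁)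
end
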